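/- arXiv:2107.05435 — 3 statements merged into one kernel-verified Lean document; each statement's English description precedes it below -/
import Mathlib

section
/- A pair of monomials (u,v) of degree d, with index sequences u = x_{a_1}···x_{a_d} and v = x_{b_1}···x_{b_d} (a_1 ≤ ... ≤ a_d, b_1 ≤ ... ≤ b_d), satisfies sort(u,v) = (u,v) if and only if a_1 ≤ b_1 ≤ a_2 ≤ b_2 ≤ ... ≤ a_d ≤ b_d. -/
/-- Split a list into (odd-position entries, even-position entries), positions counted from 1. -/
def altSplit {α : Type*} : List α → List α × List α
  | [] => ([], [])
  | a :: l => (a :: (altSplit l).2, (altSplit l).1)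

/-- The weakly increasing list of indices of a monomial (viewed as a multiset of variable indices). -/
def mSort (m : Multiset ℕ) : List ℕ := m.sort (· ≤ ·)

/-- The sorting operator: merge the indices of `u` and `v` in weakly increasing order and
give the odd positions to the first component, the even positions to the second. -/
def sortPair (u v : Multiset ℕ) : Multiset ℕ × Multiset ℕ :=
  (↑(altSplit (mSort (u + v))).1, ↑(altSplit (mSort (u + v))).2)

/-- A pair of monomials is sorted if the sorting operator fixes it (up to swapping). -/
def SortedPair (u v : Multiset ℕ) : Prop :=
  sortPair u v = (u, v) ∨ sortPair u v = (v, u)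

/-- A monomial is `t`-spread if consecutive indices (in weakly increasing order) differ by ≥ t. -/
def TSpread (t : ℕ) (m : Multiset ℕ) : Prop :=
  (mSort m).Chain' (fun a b => a + t ≤ b)

/-- `v` is componentwise dominated by `u`. -/
def Dominates (v u : Multiset ℕ) : Prop :=
  List.Forall₂ (· ≤ ·) (mSort v) (mSort u)

/-- The minimal generators of the t-spread principal Borel ideal `B_t(u)`:
t-spread monomials of the same degree componentwise dominated by `u`. -/
def BtGens (t : ℕ) (u : Multiset ℕ) : Set (Multiset ℕ) :=
  {v | Multiset.card v = Multiset.card u ∧ TSpread t v ∧ Dominates v u}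

/-- The sorted graph of `B_t(u)`: vertices the minimal generators, edges the sorted pairs. -/
def sortedGraph (t : ℕ) (u : Multiset ℕ) : SimpleGraph ↥(BtGens t u) :=
  SimpleGraph.fromRel (fun v w => SortedPair v.1 w.1)

/-- The graph has an induced cycle of length `n ≥ 4`. -/
def HasInducedCycle {V : Type*} (G : SimpleGraph V) : Prop :=
  ∃ n : ℕ, 4 ≤ n ∧ ∃ f : ZMod n → V, Function.Injective f ∧
    ∀ i j : ZMod n, G.Adj (f i) (f j) ↔ (j = i + 1 ∨ i = j + 1)

/-- Interleaving of two lists: `interleave [a₁,…] [b₁,…] = [a₁,b₁,a₂,b₂,…]`. -/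
def interleave {α : Type*} : List α → List α → List α
  | [], l => l
  | a :: l, l' => a :: interleave l' l
termination_by l l' => l.length + l'.length


/-!
Splitting a list into its odd and even positions is inverse to interleaving (for halves whose
lengths differ by at most one), and the halves of a sorted list are sorted, hence determined by
their multisets. So `sort(u, v) = (u, v)` says that the sorted list of indices of `uv` is
`a₁ b₁ a₂ b₂ ⋯ a_d b_d`; as this list is a rearrangement of the indices of `uv`, that holds
iff it is weakly increasing.
-/

section Lists

variable {α : Type*}

theorem interleave_altSplit : ∀ l : List α, interleave (altSplit l).1 (altSplit l).2 = l
  | [] => by simp [altSplit, interleave]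
  | a :: l => by rw [altSplit, interleave, interleave_altSplit l]

theorem altSplit_interleave : ∀ a b : List α, b.length ≤ a.length → a.length ≤ b.length + 1 →
    altSplit (interleave a b) = (a, b)
  | [], b, hba, _ => by
    rw [List.eq_nil_of_length_eq_zero (Nat.le_zero.mp hba)]
    simp [interleave, altSplit]
  | x :: a, b, hba, hab => by
    rw [interleave, altSplit,
      altSplit_interleave b a (by simpa using hab) (by simpa using hba)]
termination_by a b => a.length + b.length

theorem altSplit_eq_iff_eq_interleave {l a b : List α} (hba : b.length ≤ a.length)
    (hab : a.length ≤ b.length + 1) : altSplit l = (a, b) ↔ l = interleave a b :=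
  ⟨fun h => by rw [← interleave_altSplit l, h], fun h => h ▸ altSplit_interleave a b hba hab⟩

theorem altSplit_sublist : ∀ l : List α, (altSplit l).1.Sublist l ∧ (altSplit l).2.Sublist l
  | [] => ⟨.refl _, .refl _⟩
  | a :: l =>
    have ⟨h₁, h₂⟩ := altSplit_sublist l
    ⟨h₂.cons_cons a, h₁.cons a⟩

theorem coe_interleave : ∀ a b : List α, (interleave a b : Multiset α) = a + b
  | [], b => by simp [interleave]
  | x :: a, b => by
    rw [interleave, ← Multiset.cons_coe, ← Multiset.cons_coe, coe_interleave b a,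
      Multiset.cons_add, add_comm]
termination_by a b => a.length + b.length

theorem coe_eq_coe_iff_of_pairwise [PartialOrder α] {l₁ l₂ : List α} (h₁ : l₁.Pairwise (· ≤ ·))
    (h₂ : l₂.Pairwise (· ≤ ·)) : (l₁ : Multiset α) = l₂ ↔ l₁ = l₂ :=
  ⟨fun h => (Multiset.coe_eq_coe.mp h).eq_of_pairwise' h₁ h₂, congrArg _⟩

end Lists

theorem mSort_eq_iff {m : Multiset ℕ} {l : List ℕ} :
    mSort m = l ↔ (l : Multiset ℕ) = m ∧ l.Pairwise (· ≤ ·) := by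
  constructor
  · rintro rfl
    exact ⟨Multiset.sort_eq _ _, Multiset.pairwise_sort _ _⟩
  · rintro ⟨rfl, hl⟩
    exact List.mergeSort_eq_self _ hl

theorem sortPair_coe_eq_iff {a b : List ℕ} (ha : a.Pairwise (· ≤ ·)) (hb : b.Pairwise (· ≤ ·)) :
    sortPair ↑a ↑b = (↑a, ↑b) ↔ altSplit (mSort (a + b)) = (a, b) := by
  have hs : (mSort (a + b)).Pairwise (· ≤ ·) := Multiset.pairwise_sort _ _
  obtain ⟨h₁, h₂⟩ := altSplit_sublist (mSort (a + b))
  simp only [sortPair, Prod.ext_iff, coe_eq_coe_iff_of_pairwise (hs.sublist h₁) ha,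
    coe_eq_coe_iff_of_pairwise (hs.sublist h₂) hb]

/-- (u,v) satisfies sort(u,v) = (u,v) iff a₁ ≤ b₁ ≤ a₂ ≤ b₂ ≤ … ≤ a_d ≤ b_d. -/
theorem sorted_iff_interleaved (d : ℕ) (a b : List ℕ)
    (ha : a.length = d) (hb : b.length = d)
    (hsa : a.Chain' (· ≤ ·)) (hsb : b.Chain' (· ≤ ·)) :
    sortPair ↑a ↑b = (↑a, ↑b) ↔ (interleave a b).Chain' (· ≤ ·) := by
  rw [sortPair_coe_eq_iff (List.isChain_iff_pairwise.mp hsa) (List.isChain_iff_pairwise.mp hsb),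
    altSplit_eq_iff_eq_interleave (by omega) (by omega), mSort_eq_iff,
    coe_interleave, List.Chain', List.isChain_iff_pairwise]
  exact and_iff_right rfl
end

section
/- Let t ≥ 1, d ≥ 3, and u = x_{i_1}···x_{i_d} a t-spread monomial with i_1 ≥ 3. Set v = ∏_{j=4}^{d} x_{(j−1)t+3} (v = 1 if d = 3). Then the four monomials x_1x_{t+1}x_{2t+3}v, x_2x_{t+2}x_{2t+3}v, x_1x_{t+2}x_{2t+2}v, x_1x_{t+3}x_{2t+3}v are all minimal generators of B_t(u), and they form an induced 4-cycle in the sorted graph of B_t(u). -/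
/-!
The case `d = 3` is a direct computation: merging the two index lists of each pair shows that
the four consecutive pairs are fixed by the sorting operator while the two diagonal pairs are
not. For larger `d` every monomial is multiplied by the same `v`, whose indices are all at least
`3t + 3`, hence larger than every index of the degree-three parts; so merging puts the doubled
indices of `v` at the end, and the sorting operator acts on the degree-three parts alone.
Membership in `B_t(u)` holds because, counting from `j = 0`, the `j`-th smallest index of `u` is
at least `jt + 3`, while that of each of the four monomials is at most `jt + 3`.
-/

open List

section AltSplit

variable {α : Type*}

def stutter : List α → List α
  | [] => []
  | a :: l => a :: a :: stutter l

theorem mem_stutter {x : α} {l : List α} : x ∈ stutter l ↔ x ∈ l := by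
  induction l with
  | nil => rfl
  | cons a l ih => simp [stutter, ih]

theorem pairwise_stutter {r : α → α → Prop} [Std.Refl r] {l : List α} (h : l.Pairwise r) :
    (stutter l).Pairwise r := by
  induction l with
  | nil => exact .nil
  | cons a l ih =>
    rw [pairwise_cons] at h
    have ha : ∀ x ∈ stutter l, r a x := fun x hx => h.1 x (mem_stutter.1 hx)
    exact .cons (by simpa [Std.Refl.refl a] using ha) (.cons ha (ih h.2))

theorem coe_stutter (l : List α) : (stutter l : Multiset α) = l + l := by
  induction l with
  | nil => rfl
  | cons a l ih =>
    rw [stutter, ← Multiset.cons_coe, ← Multiset.cons_coe, ih, ← Multiset.cons_coe,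
      Multiset.cons_add, Multiset.add_cons]

theorem altSplit_cons_cons (a b : α) (l : List α) :
    altSplit (a :: b :: l) = (a :: (altSplit l).1, b :: (altSplit l).2) := rfl

theorem altSplit_stutter (l : List α) : altSplit (stutter l) = (l, l) := by
  induction l with
  | nil => rfl
  | cons a l ih => rw [stutter, altSplit_cons_cons, ih]

theorem altSplit_append_of_even : ∀ (l₁ l₂ : List α), Even l₁.length →
    altSplit (l₁ ++ l₂) = ((altSplit l₁).1 ++ (altSplit l₂).1, (altSplit l₁).2 ++ (altSplit l₂).2)
  | [], _, _ => rfl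
  | [_], _, h => by simp at h
  | a :: b :: l₁, l₂, h => by
    rw [cons_append, cons_append, altSplit_cons_cons, altSplit_cons_cons,
      altSplit_append_of_even l₁ l₂ (by simpa [parity_simps] using h)]
    rfl

end AltSplit

theorem forall₂_trans {α : Type*} {r : α → α → Prop} [IsTrans α r] :
    ∀ {l₁ l₂ l₃ : List α}, Forall₂ r l₁ l₂ → Forall₂ r l₂ l₃ → Forall₂ r l₁ l₃
  | _, _, _, .nil, .nil => .nil
  | _, _, _, .cons h₁₂ t₁₂, .cons h₂₃ t₂₃ => .cons (_root_.trans h₁₂ h₂₃) (forall₂_trans t₁₂ t₂₃)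

theorem coe_mSort (m : Multiset ℕ) : (mSort m : Multiset ℕ) = m := Multiset.sort_eq _ _

theorem mem_mSort {m : Multiset ℕ} {x : ℕ} : x ∈ mSort m ↔ x ∈ m := Multiset.mem_sort _

theorem length_mSort (m : Multiset ℕ) : (mSort m).length = m.card := Multiset.length_sort _

theorem pairwise_mSort (m : Multiset ℕ) : (mSort m).Pairwise (· ≤ ·) := Multiset.pairwise_sort _ _

theorem mSort_coe_of_pairwise {l : List ℕ} (h : l.Pairwise (· ≤ ·)) : mSort l = l :=
  Perm.eq_of_pairwise' (pairwise_mSort _) h (Multiset.coe_eq_coe.1 (coe_mSort _))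

theorem TSpread.pairwise {t : ℕ} {m : Multiset ℕ} (h : TSpread t m) :
    (mSort m).Pairwise (fun x y => x + t ≤ y) :=
  @IsChain.pairwise _ _ _ ⟨fun hxy hyz => by omega⟩ h

theorem pairwise_le_of_pairwise_add_le {t : ℕ} {l : List ℕ}
    (h : l.Pairwise (fun x y => x + t ≤ y)) : l.Pairwise (· ≤ ·) :=
  h.imp fun hxy => le_of_add_le_left hxy

theorem sortPair_comm (P Q : Multiset ℕ) : sortPair P Q = sortPair Q P := by
  rw [sortPair, sortPair, add_comm]

theorem sortedPair_comm (P Q : Multiset ℕ) : SortedPair P Q ↔ SortedPair Q P := by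
  rw [SortedPair, SortedPair, sortPair_comm, or_comm]

theorem not_sortedPair_of_fst_ne {P Q A B : Multiset ℕ} (h : sortPair P Q = (A, B))
    (hP : A ≠ P) (hQ : A ≠ Q) : ¬ SortedPair P Q := by
  rintro (hPQ | hQP)
  · exact hP (congrArg Prod.fst (h.symm.trans hPQ))
  · exact hQ (congrArg Prod.fst (h.symm.trans hQP))

theorem sortPair_eq_of_add_eq {P Q : Multiset ℕ} {a₁ a₂ a₃ a₄ a₅ a₆ : ℕ}
    (hmerge : P + Q = {a₁, a₂, a₃, a₄, a₅, a₆})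
    (hsorted : [a₁, a₂, a₃, a₄, a₅, a₆].Pairwise (· ≤ ·)) :
    sortPair P Q = ({a₁, a₃, a₅}, {a₂, a₄, a₆}) := by
  rw [sortPair, hmerge, show ({a₁, a₂, a₃, a₄, a₅, a₆} : Multiset ℕ) = ↑[a₁, a₂, a₃, a₄, a₅, a₆]
    from rfl, mSort_coe_of_pairwise hsorted]
  rfl

theorem sortPair_add_of_forall_le {P Q w : Multiset ℕ} (hcard : P.card = Q.card)
    (hle : ∀ x ∈ P + Q, ∀ y ∈ w, x ≤ y) :
    sortPair (P + w) (Q + w) = ((sortPair P Q).1 + w, (sortPair P Q).2 + w) := by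
  have hmerge : P + w + (Q + w) = ↑(mSort (P + Q) ++ stutter (mSort w)) := by
    rw [← Multiset.coe_add, coe_stutter, coe_mSort, coe_mSort]
    abel
  have hsorted : (mSort (P + Q) ++ stutter (mSort w)).Pairwise (· ≤ ·) :=
    pairwise_append.2 ⟨pairwise_mSort _, pairwise_stutter (pairwise_mSort _),
      fun x hx y hy => hle x (mem_mSort.1 hx) y (mem_mSort.1 (mem_stutter.1 hy))⟩
  have heven : Even (mSort (P + Q)).length := by
    rw [length_mSort, Multiset.card_add, hcard]
    exact ⟨_, rfl⟩
  rw [sortPair, hmerge, mSort_coe_of_pairwise hsorted, altSplit_append_of_even _ _ heven,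
    altSplit_stutter]
  simp only [sortPair, ← Multiset.coe_add, coe_mSort]

theorem sortedPair_add_iff {P Q w : Multiset ℕ} (hcard : P.card = Q.card)
    (hle : ∀ x ∈ P + Q, ∀ y ∈ w, x ≤ y) : SortedPair (P + w) (Q + w) ↔ SortedPair P Q := by
  simp only [SortedPair, sortPair_add_of_forall_le hcard hle, add_left_inj, Prod.ext_iff]

def IsInducedSortedFourCycle (m₁ m₂ m₃ m₄ : Multiset ℕ) : Prop :=
  List.Pairwise (· ≠ ·) [m₁, m₂, m₃, m₄] ∧
    SortedPair m₁ m₂ ∧ SortedPair m₂ m₃ ∧ SortedPair m₃ m₄ ∧ SortedPair m₄ m₁ ∧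
    ¬ SortedPair m₁ m₃ ∧ ¬ SortedPair m₃ m₁ ∧ ¬ SortedPair m₂ m₄ ∧ ¬ SortedPair m₄ m₂

theorem IsInducedSortedFourCycle.add {m₁ m₂ m₃ m₄ w : Multiset ℕ} {k : ℕ}
    (h : IsInducedSortedFourCycle m₁ m₂ m₃ m₄) (hcard : ∀ m ∈ [m₁, m₂, m₃, m₄], m.card = k)
    (hle : ∀ m ∈ [m₁, m₂, m₃, m₄], ∀ x ∈ m, ∀ y ∈ w, x ≤ y) :
    IsInducedSortedFourCycle (m₁ + w) (m₂ + w) (m₃ + w) (m₄ + w) := by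
  have key : ∀ P ∈ [m₁, m₂, m₃, m₄], ∀ Q ∈ [m₁, m₂, m₃, m₄],
      SortedPair (P + w) (Q + w) ↔ SortedPair P Q := fun P hP Q hQ =>
    sortedPair_add_iff ((hcard P hP).trans (hcard Q hQ).symm) fun x hx =>
      (Multiset.mem_add.1 hx).elim (hle P hP x) (hle Q hQ x)
  obtain ⟨hne, h₁₂, h₂₃, h₃₄, h₄₁, h₁₃, h₃₁, h₂₄, h₄₂⟩ := h
  refine ⟨?_, (key _ ?_ _ ?_).2 h₁₂, (key _ ?_ _ ?_).2 h₂₃, (key _ ?_ _ ?_).2 h₃₄,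
    (key _ ?_ _ ?_).2 h₄₁, (key _ ?_ _ ?_).not.2 h₁₃, (key _ ?_ _ ?_).not.2 h₃₁,
    (key _ ?_ _ ?_).not.2 h₂₄, (key _ ?_ _ ?_).not.2 h₄₂⟩
  · have : ([m₁, m₂, m₃, m₄].map (· + w)).Pairwise (· ≠ ·) :=
      pairwise_map.2 (hne.imp fun hPQ => mt add_right_cancel hPQ)
    simpa using this
  all_goals simp

theorem pairwise_ne_degree_three {t : ℕ} (ht : 1 ≤ t) :
    List.Pairwise (· ≠ ·) [({1, t + 1, 2 * t + 3} : Multiset ℕ), {2, t + 2, 2 * t + 3},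
      {1, t + 2, 2 * t + 2}, {1, t + 3, 2 * t + 3}] := by
  simp only [pairwise_cons, mem_cons, not_mem_nil, forall_eq_or_imp, forall_eq, or_false,
    IsEmpty.forall_iff, implies_true, Pairwise.nil, and_true]
  refine ⟨⟨?_, ?_, ?_⟩, ⟨?_, ?_⟩, ?_⟩
  · exact ne_of_mem_of_not_mem' (a := 1) (by simp) (by simp)
  · exact ne_of_mem_of_not_mem' (a := t + 1) (by simp) (by simp; omega)
  · exact ne_of_mem_of_not_mem' (a := t + 1) (by simp) (by simp; omega)
  · exact ne_of_mem_of_not_mem' (a := 2) (by simp) (by simp; omega)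
  · exact ne_of_mem_of_not_mem' (a := 2) (by simp) (by simp)
  · exact ne_of_mem_of_not_mem' (a := t + 2) (by simp) (by simp; omega)

theorem isInducedSortedFourCycle_degree_three {t : ℕ} (ht : 1 ≤ t) :
    IsInducedSortedFourCycle {1, t + 1, 2 * t + 3} {2, t + 2, 2 * t + 3} {1, t + 2, 2 * t + 2}
      {1, t + 3, 2 * t + 3} := by
  have h₁₂ : sortPair {1, t + 1, 2 * t + 3} {2, t + 2, 2 * t + 3} =
      ({1, t + 1, 2 * t + 3}, {2, t + 2, 2 * t + 3}) :=
    sortPair_eq_of_add_eq (by simp only [Multiset.insert_eq_cons, ← Multiset.singleton_add]; abel)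
      (by simp; omega)
  have h₂₃ : sortPair {2, t + 2, 2 * t + 3} {1, t + 2, 2 * t + 2} =
      ({1, t + 2, 2 * t + 2}, {2, t + 2, 2 * t + 3}) :=
    sortPair_eq_of_add_eq (by simp only [Multiset.insert_eq_cons, ← Multiset.singleton_add]; abel)
      (by simp; omega)
  have h₃₄ : sortPair {1, t + 2, 2 * t + 2} {1, t + 3, 2 * t + 3} =
      ({1, t + 2, 2 * t + 2}, {1, t + 3, 2 * t + 3}) :=
    sortPair_eq_of_add_eq (by simp only [Multiset.insert_eq_cons, ← Multiset.singleton_add]; abel)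
      (by simp; omega)
  have h₁₄ : sortPair {1, t + 1, 2 * t + 3} {1, t + 3, 2 * t + 3} =
      ({1, t + 1, 2 * t + 3}, {1, t + 3, 2 * t + 3}) :=
    sortPair_eq_of_add_eq (by simp only [Multiset.insert_eq_cons, ← Multiset.singleton_add]; abel)
      (by simp; omega)
  have h₁₃ : sortPair {1, t + 1, 2 * t + 3} {1, t + 2, 2 * t + 2} =
      ({1, t + 1, 2 * t + 2}, {1, t + 2, 2 * t + 3}) :=
    sortPair_eq_of_add_eq (by simp only [Multiset.insert_eq_cons, ← Multiset.singleton_add]; abel)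
      (by simp; omega)
  have h₂₄ : sortPair {2, t + 2, 2 * t + 3} {1, t + 3, 2 * t + 3} =
      ({1, t + 2, 2 * t + 3}, {2, t + 3, 2 * t + 3}) :=
    sortPair_eq_of_add_eq (by simp only [Multiset.insert_eq_cons, ← Multiset.singleton_add]; abel)
      (by simp; omega)
  have n₁₃ : ¬ SortedPair {1, t + 1, 2 * t + 3} {1, t + 2, 2 * t + 2} :=
    not_sortedPair_of_fst_ne h₁₃ (ne_of_mem_of_not_mem' (a := 2 * t + 2) (by simp) (by simp; omega))
      (ne_of_mem_of_not_mem' (a := t + 1) (by simp) (by simp; omega))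
  have n₂₄ : ¬ SortedPair {2, t + 2, 2 * t + 3} {1, t + 3, 2 * t + 3} :=
    not_sortedPair_of_fst_ne h₂₄ (ne_of_mem_of_not_mem' (a := 1) (by simp) (by simp))
      (ne_of_mem_of_not_mem' (a := t + 2) (by simp) (by simp; omega))
  exact ⟨pairwise_ne_degree_three ht, .inl h₁₂, .inr h₂₃, .inl h₃₄,
    (sortedPair_comm _ _).1 (.inl h₁₄), n₁₃, (sortedPair_comm _ _).not.1 n₁₃, n₂₄,
    (sortedPair_comm _ _).not.1 n₂₄⟩

theorem forall₂_map_range_le_of_pairwise {t : ℕ} :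
    ∀ {l : List ℕ} {b : ℕ}, l.Pairwise (fun x y => x + t ≤ y) → (∀ x ∈ l, b ≤ x) →
      Forall₂ (· ≤ ·) ((range l.length).map fun j => j * t + b) l
  | [], _, _, _ => .nil
  | a :: l, b, hl, hb => by
    rw [pairwise_cons] at hl
    have htail : ∀ x ∈ l, b + t ≤ x := fun x hx => by
      have := hb a mem_cons_self
      have := hl.1 x hx
      omega
    rw [length_cons, range_succ_eq_map, map_cons, map_map]
    refine .cons (by simpa using hb a mem_cons_self) ?_
    convert forall₂_map_range_le_of_pairwise hl.2 htail using 2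
    ext j
    simp only [Function.comp_apply, Nat.succ_eq_add_one]
    ring

theorem mem_btGens_of_forall₂ {t b : ℕ} {u : Multiset ℕ} {l : List ℕ} (hspread : TSpread t u)
    (hmin : ∀ i ∈ u, b ≤ i) (hl : l.Pairwise (fun x y => x + t ≤ y))
    (hdom : Forall₂ (· ≤ ·) l ((range u.card).map fun j => j * t + b)) :
    (l : Multiset ℕ) ∈ BtGens t u := by
  have hsort : mSort l = l := mSort_coe_of_pairwise (pairwise_le_of_pairwise_add_le hl)
  have hu : Forall₂ (· ≤ ·) ((range u.card).map fun j => j * t + b) (mSort u) := by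
    have := forall₂_map_range_le_of_pairwise hspread.pairwise fun x hx => hmin x (mem_mSort.1 hx)
    rwa [length_mSort] at this
  refine ⟨?_, ?_, ?_⟩
  · simpa using hdom.length_eq
  · rw [TSpread, hsort]
    exact hl.isChain
  · rw [Dominates, hsort]
    exact forall₂_trans hdom hu

def spreadTail (t n : ℕ) : List ℕ := (range n).map fun j => (j + 3) * t + 3

theorem le_of_mem_spreadTail {t n x : ℕ} (hx : x ∈ spreadTail t n) : 3 * t + 3 ≤ x := by
  obtain ⟨j, -, rfl⟩ := List.mem_map.1 hx
  have : 3 * t ≤ (j + 3) * t := Nat.mul_le_mul_right _ (by omega)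
  omega

theorem pairwise_spreadTail (t n : ℕ) : (spreadTail t n).Pairwise (fun x y => x + t ≤ y) := by
  refine pairwise_map.2 (pairwise_lt_range.imp fun {i j} hij => ?_)
  have : (i + 3 + 1) * t ≤ (j + 3) * t := Nat.mul_le_mul_right _ (by omega)
  linarith

theorem map_range_eq_append_spreadTail {t d : ℕ} (hd : 3 ≤ d) :
    (range d).map (fun j => j * t + 3) = [3, t + 3, 2 * t + 3] ++ spreadTail t (d - 3) := by
  obtain ⟨n, rfl⟩ := Nat.exists_eq_add_of_le hd
  rw [Nat.add_sub_cancel_left, range_add, map_append, map_map, spreadTail]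
  congr 1
  · simp [range_succ]
  · congr 1
    ext j
    simp only [Function.comp_apply]
    ring

theorem mem_btGens_append_spreadTail {t d a b c : ℕ} {u : Multiset ℕ} (hd : 3 ≤ d)
    (hcard : u.card = d) (hspread : TSpread t u) (hmin : ∀ i ∈ u, 3 ≤ i)
    (hab : a + t ≤ b) (hbc : b + t ≤ c) (hb : b ≤ t + 3) (hc : c ≤ 2 * t + 3) :
    ({a, b, c} + ↑(spreadTail t (d - 3)) : Multiset ℕ) ∈ BtGens t u := by
  refine mem_btGens_of_forall₂ (l := [a, b, c] ++ spreadTail t (d - 3)) hspread hmin ?_ ?_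
  · refine pairwise_append.2 ⟨by simp; omega, pairwise_spreadTail t _, fun x hx y hy => ?_⟩
    have := le_of_mem_spreadTail hy
    simp only [mem_cons, not_mem_nil, or_false] at hx
    omega
  · rw [hcard, map_range_eq_append_spreadTail hd]
    exact rel_append (by simp [hb, hc]; omega) (forall₂_refl _)

/-- for a t-spread monomial u of degree d ≥ 3 with smallest index ≥ 3,
with v = ∏_{j=4}^{d} x_{(j−1)t+3}, the four monomials x₁x_{t+1}x_{2t+3}v,
x₂x_{t+2}x_{2t+3}v, x₁x_{t+2}x_{2t+2}v, x₁x_{t+3}x_{2t+3}v are minimal generators of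
B_t(u) and form an induced 4-cycle in the sorted graph. -/
theorem i1_ge_three_cycle (t d : ℕ) (ht : 1 ≤ t) (hd : 3 ≤ d) (u : Multiset ℕ)
    (hcard : Multiset.card u = d) (hspread : TSpread t u) (hmin : ∀ i ∈ u, 3 ≤ i) :
    ((({1, t + 1, 2 * t + 3} : Multiset ℕ) +
        ↑((List.range (d - 3)).map (fun j => (j + 3) * t + 3))) ∈ BtGens t u ∧
     (({2, t + 2, 2 * t + 3} : Multiset ℕ) +
        ↑((List.range (d - 3)).map (fun j => (j + 3) * t + 3))) ∈ BtGens t u ∧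
     (({1, t + 2, 2 * t + 2} : Multiset ℕ) +
        ↑((List.range (d - 3)).map (fun j => (j + 3) * t + 3))) ∈ BtGens t u ∧
     (({1, t + 3, 2 * t + 3} : Multiset ℕ) +
        ↑((List.range (d - 3)).map (fun j => (j + 3) * t + 3))) ∈ BtGens t u) ∧
    (let v : Multiset ℕ := ↑((List.range (d - 3)).map (fun j => (j + 3) * t + 3));
     let m₁ : Multiset ℕ := {1, t + 1, 2 * t + 3} + v;
     let m₂ : Multiset ℕ := {2, t + 2, 2 * t + 3} + v;
     let m₃ : Multiset ℕ := {1, t + 2, 2 * t + 2} + v;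
     let m₄ : Multiset ℕ := {1, t + 3, 2 * t + 3} + v;
     List.Pairwise (· ≠ ·) [m₁, m₂, m₃, m₄] ∧
     SortedPair m₁ m₂ ∧ SortedPair m₂ m₃ ∧ SortedPair m₃ m₄ ∧ SortedPair m₄ m₁ ∧
     ¬ SortedPair m₁ m₃ ∧ ¬ SortedPair m₃ m₁ ∧
     ¬ SortedPair m₂ m₄ ∧ ¬ SortedPair m₄ m₂) := by
  refine ⟨⟨?_, ?_, ?_, ?_⟩, ?_⟩
  iterate 4
    exact mem_btGens_append_spreadTail hd hcard hspread hmin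
      (by omega) (by omega) (by omega) (by omega)
  have hle : ∀ m ∈ [({1, t + 1, 2 * t + 3} : Multiset ℕ), {2, t + 2, 2 * t + 3},
      {1, t + 2, 2 * t + 2}, {1, t + 3, 2 * t + 3}], ∀ x ∈ m, ∀ y ∈ spreadTail t (d - 3),
      x ≤ y := by
    intro m hm x hx y hy
    have := le_of_mem_spreadTail hy
    simp only [mem_cons, not_mem_nil, or_false] at hm
    rcases hm with rfl | rfl | rfl | rfl <;> simp at hx <;> omega
  exact (isInducedSortedFourCycle_degree_three ht).add (k := 3) (by simp) hle
end

section
/- Let t ≥ 1, d ≥ 4, and u = x_2 · ∏_{j=2}^{d} x_{i_j} a t-spread monomial such that i_j ≥ (j−1)t+4 for some 2 ≤ j ≤ d. Set v = ∏_{j=1}^{d−3} x_{(j−1)t+1}. Then the four monomials x_{(d−3)t+1}x_{(d−2)t+2}x_{(d−1)t+2}v, x_{(d−3)t+1}x_{(d−2)t+2}x_{(d−1)t+4}v, x_{(d−3)t+1}x_{(d−2)t+1}x_{(d−1)t+3}v, x_{(d−3)t+2}x_{(d−2)t+2}x_{(d−1)t+3}v are minimal generators of B_t(u) and form an induced 4-cycle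 in the sorted graph of B_t(u). -/
/-!
All four monomials share the prefix `v`, whose indices lie below their last three, so sorting a
pair of them fixes the doubled prefix and only interleaves the six remaining indices. The pairs
`m₁m₂`, `m₂m₃`, `m₃m₄`, `m₄m₁` already interleave, while sorting `m₁m₃` or `m₂m₄` exchanges one
index between the two monomials. Membership in `B_t(u)` comes from the lower bound
`i_j ≥ (j - 1) t + 2` forced by `i_1 = 2` and the spread, and from `i_d ≥ (d - 1) t + 4`, which the
big gap propagates to the last index.
-/

theorem mSort_coe {l : List ℕ} (hl : l.Pairwise (· ≤ ·)) : mSort ↑l = l := by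
  rw [mSort, Multiset.coe_sort, List.mergeSort_eq_self _ hl]

theorem eq_of_coe_eq_of_pairwise {l l' : List ℕ} (hl : l.Pairwise (· ≤ ·))
    (hl' : l'.Pairwise (· ≤ ·)) (h : (l : Multiset ℕ) = l') : l = l' := by
  rw [← mSort_coe hl, ← mSort_coe hl', h]

theorem altSplit_flatMap_pair_append (L M : List ℕ) :
    altSplit (L.flatMap (fun x => [x, x]) ++ M) = (L ++ (altSplit M).1, L ++ (altSplit M).2) := by
  induction L with
  | nil => rfl
  | cons x L ih => simp [altSplit, ih]

theorem coe_altSplit_add (M : List ℕ) :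
    (↑(altSplit M).1 + ↑(altSplit M).2 : Multiset ℕ) = ↑M := by
  induction M with
  | nil => rfl
  | cons x M ih => rw [altSplit, ← Multiset.cons_coe, Multiset.cons_add, add_comm, ih]; rfl

theorem coe_flatMap_pair (L : List ℕ) :
    (↑(L.flatMap fun x => [x, x]) : Multiset ℕ) = ↑L + ↑L := by
  induction L with
  | nil => rfl
  | cons x L ih =>
    simp only [List.flatMap_cons, List.cons_append, List.nil_append, ← Multiset.cons_coe, ih,
      Multiset.cons_add, Multiset.add_cons]

theorem sortPair_comm_s17 (u v : Multiset ℕ) : sortPair u v = sortPair v u := by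
  rw [sortPair, sortPair, add_comm]

theorem sortedPair_comm_s17 {u v : Multiset ℕ} : SortedPair u v ↔ SortedPair v u := by
  rw [SortedPair, SortedPair, sortPair_comm_s17]
  exact or_comm

theorem sortPair_congr {u v u' v' : Multiset ℕ} (h : u + v = u' + v') :
    sortPair u v = sortPair u' v' := by
  rw [sortPair, sortPair, h]

theorem sortPair_add_common {X Y V : Multiset ℕ} {M : List ℕ} (hsum : X + Y = ↑M)
    (hM : M.Pairwise (· ≤ ·)) (hVM : ∀ x ∈ V, ∀ y ∈ M, x ≤ y) :
    sortPair (X + V) (Y + V) = (↑(altSplit M).1 + V, ↑(altSplit M).2 + V) := by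
  set L := mSort V
  have hLV : (L : Multiset ℕ) = V := Multiset.sort_eq V _
  have hmerge : mSort (X + V + (Y + V)) = L.flatMap (fun x => [x, x]) ++ M := by
    have hsorted : (L.flatMap (fun x => [x, x]) ++ M).Pairwise (· ≤ ·) := by
      refine List.pairwise_append.2 ⟨List.pairwise_flatMap.2 ⟨by simp, ?_⟩, hM, ?_⟩
      · exact (Multiset.pairwise_sort V _).imp (by simp_all)
      · simp only [List.mem_flatMap, List.mem_cons, List.not_mem_nil, or_false]
        rintro x ⟨z, hz, rfl | rfl⟩ y hy <;>
          exact hVM _ (by rw [← hLV]; exact Multiset.mem_coe.2 hz) y hy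
    rw [← mSort_coe hsorted, ← Multiset.coe_add, coe_flatMap_pair, hLV, ← hsum]
    abel_nf
  rw [sortPair, hmerge, altSplit_flatMap_pair_append, ← Multiset.coe_add, ← Multiset.coe_add,
    hLV, add_comm V, add_comm V]

theorem sortPair_interleave {V : Multiset ℕ} {a₁ a₂ a₃ b₁ b₂ b₃ : ℕ}
    (h : a₁ ≤ b₁ ∧ b₁ ≤ a₂ ∧ a₂ ≤ b₂ ∧ b₂ ≤ a₃ ∧ a₃ ≤ b₃) (hV : ∀ x ∈ V, x ≤ a₁) :
    sortPair ({a₁, a₂, a₃} + V) ({b₁, b₂, b₃} + V) = ({a₁, a₂, a₃} + V, {b₁, b₂, b₃} + V) := by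
  have hM : [a₁, b₁, a₂, b₂, a₃, b₃].Pairwise (· ≤ ·) :=
    List.isChain_iff_pairwise.1 (by simpa only [List.isChain_cons_cons, List.isChain_singleton,
      and_true] using h)
  refine sortPair_add_common (coe_altSplit_add [a₁, b₁, a₂, b₂, a₃, b₃]) hM fun x hx y hy => ?_
  rcases List.mem_cons.1 hy with rfl | hy
  · exact hV x hx
  · exact (hV x hx).trans (List.rel_of_pairwise_cons hM hy)

theorem not_sortedPair_of_add_eq {u v u' v' : Multiset ℕ} (hsum : u + v = u' + v')
    (h' : sortPair u' v' = (u', v')) (hu : u' ≠ u) (hv : u' ≠ v) : ¬ SortedPair u v := by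
  rw [SortedPair, sortPair_congr hsum, h']
  rintro (h | h) <;> simp_all [Prod.ext_iff]

theorem triple_add_ne {x₁ x₂ x₃ y₁ y₂ y₃ : ℕ} (hx : x₁ ≤ x₂ ∧ x₂ ≤ x₃) (hy : y₁ ≤ y₂ ∧ y₂ ≤ y₃)
    (h : [x₁, x₂, x₃] ≠ [y₁, y₂, y₃]) (V : Multiset ℕ) :
    ({x₁, x₂, x₃} + V : Multiset ℕ) ≠ {y₁, y₂, y₃} + V := fun he =>
  h (eq_of_coe_eq_of_pairwise (List.isChain_iff_pairwise.1 (by simpa using hx))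
    (List.isChain_iff_pairwise.1 (by simpa using hy)) (add_right_cancel he))

theorem sortedPair_fourCycle {V : Multiset ℕ} {a b c : ℕ} (hab : a + 1 ≤ b) (hbc : b ≤ c)
    (hV : ∀ x ∈ V, x ≤ a + 1) :
    let m₁ : Multiset ℕ := {a + 1, b + 2, c + 2} + V
    let m₂ : Multiset ℕ := {a + 1, b + 2, c + 4} + V
    let m₃ : Multiset ℕ := {a + 1, b + 1, c + 3} + V
    let m₄ : Multiset ℕ := {a + 2, b + 2, c + 3} + V
    List.Pairwise (· ≠ ·) [m₁, m₂, m₃, m₄] ∧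
    SortedPair m₁ m₂ ∧ SortedPair m₂ m₃ ∧ SortedPair m₃ m₄ ∧ SortedPair m₄ m₁ ∧
    ¬ SortedPair m₁ m₃ ∧ ¬ SortedPair m₃ m₁ ∧
    ¬ SortedPair m₂ m₄ ∧ ¬ SortedPair m₄ m₂ := by
  intro m₁ m₂ m₃ m₄
  have h₁₂ : sortPair m₁ m₂ = (m₁, m₂) := sortPair_interleave (by omega) hV
  have h₃₂ : sortPair m₃ m₂ = (m₃, m₂) := sortPair_interleave (by omega) hV
  have h₃₄ : sortPair m₃ m₄ = (m₃, m₄) := sortPair_interleave (by omega) hV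
  have h₁₄ : sortPair m₁ m₄ = (m₁, m₄) := sortPair_interleave (by omega) hV
  -- sorting m₁ m₃ (resp. m₂ m₄) swaps their middle (resp. last) indices
  have h₁₃ : ¬ SortedPair m₁ m₃ :=
    not_sortedPair_of_add_eq (u' := {a + 1, b + 1, c + 2} + V) (v' := {a + 1, b + 2, c + 3} + V)
      (by simp only [m₁, m₃, Multiset.insert_eq_cons, ← Multiset.singleton_add]; abel)
      (sortPair_interleave (by omega) hV)
      (triple_add_ne (by omega) (by omega) (by simp) V)
      (triple_add_ne (by omega) (by omega) (by simp) V)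
  have h₂₄ : ¬ SortedPair m₂ m₄ :=
    not_sortedPair_of_add_eq (u' := {a + 1, b + 2, c + 3} + V) (v' := {a + 2, b + 2, c + 4} + V)
      (by simp only [m₂, m₄, Multiset.insert_eq_cons, ← Multiset.singleton_add]; abel)
      (sortPair_interleave (by omega) hV)
      (triple_add_ne (by omega) (by omega) (by simp) V)
      (triple_add_ne (by omega) (by omega) (by simp) V)
  refine ⟨?_, Or.inl h₁₂, Or.inr (by rw [sortPair_comm_s17, h₃₂]), Or.inl h₃₄,
    Or.inr (by rw [sortPair_comm_s17, h₁₄]), h₁₃, mt sortedPair_comm_s17.1 h₁₃, h₂₄,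
    mt sortedPair_comm_s17.1 h₂₄⟩
  simp only [List.pairwise_cons, List.mem_cons, List.not_mem_nil, forall_eq_or_imp, or_false,
    forall_eq, List.Pairwise.nil, IsEmpty.forall_iff, implies_true, and_true]
  refine ⟨⟨?_, ?_, ?_⟩, ⟨?_, ?_⟩, ?_⟩ <;> exact triple_add_ne (by omega) (by omega) (by simp) V

theorem add_le_of_mem_range_map {t n x : ℕ} (hx : x ∈ (List.range n).map (fun j => j * t + 1)) :
    x + t ≤ n * t + 1 := by
  obtain ⟨k, hk, rfl⟩ := List.mem_map.1 hx
  nlinarith [List.mem_range.1 hk]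

theorem mem_btGens_of_isChain {t : ℕ} {l l' : List ℕ} (hl' : l'.Pairwise (· ≤ ·))
    (hspread : l.IsChain (fun a b => a + t ≤ b)) (hdom : List.Forall₂ (· ≤ ·) l l') :
    (↑l : Multiset ℕ) ∈ BtGens t ↑l' := by
  have hl : l.Pairwise (· ≤ ·) :=
    List.isChain_iff_pairwise.1 (hspread.imp fun a b h => le_of_add_le_left h)
  refine ⟨by simpa using hdom.length_eq, ?_, ?_⟩
  · rw [TSpread, mSort_coe hl]
    exact hspread
  · rw [Dominates, mSort_coe hl, mSort_coe hl']
    exact hdom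

theorem triple_add_range_mem_btGens {t n x y z : ℕ} {f : ℕ → ℕ}
    (hf : ((List.range (n + 3)).map f).Pairwise (· ≤ ·)) (hbase : ∀ k < n, k * t + 1 ≤ f k)
    (hx : n * t + 1 ≤ x) (hxy : x + t ≤ y) (hyz : y + t ≤ z)
    (hxf : x ≤ f n) (hyf : y ≤ f (n + 1)) (hzf : z ≤ f (n + 2)) :
    ({x, y, z} : Multiset ℕ) + ↑((List.range n).map (fun j => j * t + 1)) ∈
      BtGens t ↑((List.range (n + 3)).map f) := by
  set L := (List.range n).map (fun j => j * t + 1)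
  have hu : (List.range (n + 3)).map f = (List.range n).map f ++ [f n, f (n + 1), f (n + 2)] := by
    simp [List.range_succ]
  rw [hu, add_comm _ (L : Multiset ℕ)]
  refine mem_btGens_of_isChain (hu ▸ hf) ?_ ?_
  · refine List.isChain_append.2 ⟨?_, by simp [hxy, hyz], ?_⟩
    · rw [List.isChain_map, List.isChain_range]
      intro k _
      rw [Nat.succ_eq_add_one, add_mul, one_mul]
      omega
    · intro a ha b hb
      simp only [List.head?_cons, Option.mem_def, Option.some.injEq] at hb
      exact hb ▸ (add_le_of_mem_range_map (List.mem_of_getLast? ha)).trans hx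
  · refine List.rel_append ?_ (by simp [hxf, hyf, hzf])
    rw [List.forall₂_map_left_iff, List.forall₂_map_right_iff, List.forall₂_same]
    exact fun k hk => hbase k (List.mem_range.1 hk)

theorem add_mul_le_of_spread {t d : ℕ} {i : ℕ → ℕ}
    (hspread : ∀ j, 1 ≤ j → j < d → i j + t ≤ i (j + 1)) {a k : ℕ} (ha : 1 ≤ a)
    (hk : a + k ≤ d) : i a + k * t ≤ i (a + k) := by
  induction k with
  | zero => simp
  | succ k ih =>
    have := hspread (a + k) (by omega) (by omega)
    rw [add_one_mul, ← add_assoc, ← add_assoc]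
    linarith [ih (by omega)]

theorem pairwise_le_of_spread {t d : ℕ} {i : ℕ → ℕ}
    (hspread : ∀ j, 1 ≤ j → j < d → i j + t ≤ i (j + 1)) :
    ((List.range d).map fun k => i (k + 1)).Pairwise (· ≤ ·) := by
  refine List.pairwise_map.2 (List.pairwise_lt_range.imp_of_mem fun {a b} _ hb hab => ?_)
  have := add_mul_le_of_spread hspread (a := a + 1) (k := b - a) (by omega)
    (by have := List.mem_range.1 hb; omega)
  rw [show a + 1 + (b - a) = b + 1 by omega] at this
  omega

/-- for a t-spread monomial u = x₂·x_{i₂}···x_{i_d} (d ≥ 4) with some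
i_j ≥ (j−1)t+4, the four listed monomials are minimal generators of B_t(u) and form an
induced 4-cycle in the sorted graph. Here v = ∏_{j=1}^{d−3} x_{(j−1)t+1}. -/
theorem i1_two_big_gap_cycle (t d : ℕ) (ht : 1 ≤ t) (hd : 4 ≤ d) (i : ℕ → ℕ)
    (h1 : i 1 = 2) (hspread : ∀ j, 1 ≤ j → j < d → i j + t ≤ i (j + 1))
    (hbig : ∃ j, 2 ≤ j ∧ j ≤ d ∧ (j - 1) * t + 4 ≤ i j) :
    (let u : Multiset ℕ := ↑((List.range d).map (fun k => i (k + 1)));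
     let v : Multiset ℕ := ↑((List.range (d - 3)).map (fun j => j * t + 1));
     let m₁ : Multiset ℕ :=
       {(d - 3) * t + 1, (d - 2) * t + 2, (d - 1) * t + 2} + v;
     let m₂ : Multiset ℕ :=
       {(d - 3) * t + 1, (d - 2) * t + 2, (d - 1) * t + 4} + v;
     let m₃ : Multiset ℕ :=
       {(d - 3) * t + 1, (d - 2) * t + 1, (d - 1) * t + 3} + v;
     let m₄ : Multiset ℕ :=
       {(d - 3) * t + 2, (d - 2) * t + 2, (d - 1) * t + 3} + v;
     m₁ ∈ BtGens t u ∧ m₂ ∈ BtGens t u ∧ m₃ ∈ BtGens t u ∧ m₄ ∈ BtGens t u ∧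
     List.Pairwise (· ≠ ·) [m₁, m₂, m₃, m₄] ∧
     SortedPair m₁ m₂ ∧ SortedPair m₂ m₃ ∧ SortedPair m₃ m₄ ∧ SortedPair m₄ m₁ ∧
     ¬ SortedPair m₁ m₃ ∧ ¬ SortedPair m₃ m₁ ∧
     ¬ SortedPair m₂ m₄ ∧ ¬ SortedPair m₄ m₂) := by
  obtain ⟨n, rfl⟩ : ∃ n, d = n + 3 := ⟨d - 3, by omega⟩
  simp only [Nat.add_sub_cancel, show n + 3 - 2 = n + 1 by omega, show n + 3 - 1 = n + 2 by omega]
  have hlow : ∀ k < n + 3, k * t + 2 ≤ i (k + 1) := fun k hk => by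
    simpa [h1, add_comm] using add_mul_le_of_spread hspread le_rfl (show 1 + k ≤ n + 3 by omega)
  have hlast : (n + 2) * t + 4 ≤ i (n + 2 + 1) := by
    show _ ≤ i (n + 3)
    obtain ⟨j, hj2, hjd, hj⟩ := hbig
    have := add_mul_le_of_spread hspread (a := j) (k := n + 3 - j) (by omega) (by omega)
    rw [Nat.add_sub_cancel' hjd] at this
    have : (j - 1) * t + (n + 3 - j) * t = (n + 2) * t := by rw [← add_mul]; congr 1; omega
    omega
  have hu := pairwise_le_of_spread hspread
  have hbase : ∀ k < n, k * t + 1 ≤ i (k + 1) := fun k hk => (hlow k (by omega)).trans' (by omega)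
  have hv : ∀ x ∈ ((List.range n).map fun j => j * t + 1 : Multiset ℕ), x ≤ n * t + 1 := by
    intro x hx
    linarith [add_le_of_mem_range_map (Multiset.mem_coe.1 hx)]
  have h₀ := hlow n (by omega)
  have h₁ := hlow (n + 1) (by omega)
  have htB : (n + 1) * t = n * t + t := by ring
  have htC : (n + 2) * t = n * t + t + t := by ring
  refine ⟨?_, ?_, ?_, ?_, sortedPair_fourCycle (by omega) (by omega) hv⟩ <;>
    exact triple_add_range_mem_btGens hu hbase (by omega) (by omega) (by omega) (by omega)
      (by omega) (by omega)
end
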